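/- arXiv:1810.00312 — 2 statements merged into one kernel-verified Lean document; each statement's English description precedes it below -/
import Mathlib

section
/- Let K = {0, 3, 4, 7, 8, 9} ⊆ ZMod 12 and D its complement. For all u, v : ZMod 12, if the affine map g(x) = v*x + u satisfies g(g(x)) = x for all x, g(x) ≠ x for all x, and the image of K under g equals D, then v = 5 and u = 2. In other words, the dichotomy (K/D) is strong: x ↦ 5x + 2 is the unique affine quasipolarity carrying K onto D. -/
/-!
An affine map `x ↦ v * x + u` is an involution exactly when `v ^ 2 = 1` and `(v + 1) * u = 0`,
so on `ZMod 12` only the units `v ∈ {1, 5, 7, 11}` occur and `u` is confined to a few values.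
Checking fixed-point freeness and `K ↦ Kᶜ` on the remaining candidates leaves only `x ↦ 5 * x + 2`.
-/

theorem affine_involutive_iff {R : Type*} [CommRing R] (u v : R) :
    (∀ x, v * (v * x + u) + u = x) ↔ v * v = 1 ∧ v * u + u = 0 := by
  constructor
  · intro h
    have h0 : v * u + u = 0 := by simpa using h 0
    exact ⟨by linear_combination h 1 - h0, h0⟩
  · rintro ⟨hvv, hvu⟩ x
    linear_combination x * hvv + hvu

set_option synthInstance.maxSize 200 in
theorem eq_five_two_of_involutive_of_mapsTo_compl (u v : ZMod 12) (hvv : v * v = 1)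
    (hvu : v * u + u = 0) (hfree : ∀ x, v * x + u ≠ x)
    (hmaps : ∀ x ∈ ({0, 3, 4, 7, 8, 9} : Finset (ZMod 12)),
      v * x + u ∉ ({0, 3, 4, 7, 8, 9} : Finset (ZMod 12))) :
    v = 5 ∧ u = 2 := by
  revert u v
  decide

/-- The dichotomy `(K/D)` with `K = {0,3,4,7,8,9}` and `D = Kᶜ` is strong:
the only affine involution of `ZMod 12` without fixed points carrying `K`
onto `D` is `x ↦ 5*x + 2`. -/
theorem stmt_3 :
    let K : Set (ZMod 12) := {0, 3, 4, 7, 8, 9}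
    ∀ u v : ZMod 12,
      (∀ x : ZMod 12, v * (v * x + u) + u = x) →
      (∀ x : ZMod 12, v * x + u ≠ x) →
      (fun x : ZMod 12 => v * x + u) '' K = Kᶜ →
      v = 5 ∧ u = 2 := by
  intro K u v hinv hfree hK
  obtain ⟨hvv, hvu⟩ := (affine_involutive_iff u v).1 hinv
  have hmaps : Set.MapsTo (fun x => v * x + u) K Kᶜ := hK ▸ Set.mapsTo_image _ K
  refine eq_five_two_of_involutive_of_mapsTo_compl u v hvv hvu hfree fun x hx => ?_
  simpa [K] using hmaps (by simpa [K] using hx)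
end

section
/- Let κ = {0, 2, 3, 4, 7, 8} ⊆ ZMod 12 and δ its complement. The affine map h(x) = 7*x + 9 is an involution without fixed points, maps κ onto δ, and differs from the map x ↦ -x + 1 (which also maps κ onto δ). Consequently the dichotomy (κ/δ) is not strong in the category of all affine transformations of ZMod 12: its quasipolarity is not unique there. -/
open Function

theorem Function.Involutive.image_eq_compl {α : Type*} {f : α → α} (hf : Involutive f)
    {s : Set α} (h : ∀ x, f x ∈ s ↔ x ∉ s) : f '' s = sᶜ := by
  rw [hf.image_eq_preimage_symm]
  exact Set.ext h

/-- The affine map `h(x) = 7*x + 9` on `ZMod 12` is an involution without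
fixed points mapping `κ = {0,2,3,4,7,8}` onto its complement, and it differs
from `x ↦ -x + 1`, which also maps `κ` onto the complement.  Hence the
dichotomy `(κ/κᶜ)` is not strong in the category of all affine
transformations of `ZMod 12`. -/
theorem stmt_5 :
    let κ : Set (ZMod 12) := {0, 2, 3, 4, 7, 8}
    let δ : Set (ZMod 12) := κᶜ
    (∀ x : ZMod 12, 7 * (7 * x + 9) + 9 = x) ∧
    (∀ x : ZMod 12, 7 * x + 9 ≠ x) ∧
    (fun x : ZMod 12 => 7 * x + 9) '' κ = δ ∧
    (fun x : ZMod 12 => -x + 1) '' κ = δ ∧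
    (fun x : ZMod 12 => 7 * x + 9) ≠ (fun x : ZMod 12 => -x + 1) := by
  intro κ δ
  have h_involutive : Involutive fun x : ZMod 12 => 7 * x + 9 := by
    unfold Involutive
    decide
  have neg_involutive : Involutive fun x : ZMod 12 => -x + 1 := fun x => by ring
  refine ⟨h_involutive, by decide, h_involutive.image_eq_compl (by decide),
    neg_involutive.image_eq_compl (by decide), fun h => ?_⟩
  exact absurd (congrFun h 0) (by decide)
end
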